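/- (Strong duality theorem I) Assume that either f is a proper polyhedral convex function and D is a nonempty generalized polyhedral convex set, or f is a proper generalized polyhedral convex function and D is a nonempty polyhedral convex set. If one of the problems (P), (D) has a solution, then both have solutions and the optimal values of (P) and (D) are equal. -/

import Mathlib

/-!
All the data (the half-spaces of `D` and `dom f` and the affine pieces of `f`) involve finitely
many functionals; collecting them into `T : X → ℝ^ι` gives `f = h ∘ T` on `dom f` with `h` a
maximum of affine functions. Because at most one of `D`, `dom f` involves an affine subspace `L`,
and `T L` is a polyhedron, `T (D ∩ dom f)` is the intersection of a polyhedron containing `T D`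
with a polyhedron containing `T (dom f)`. Linear programming duality in `ℝ^ι` (from Farkas' lemma:
finitely generated cones are closed by Carathéodory, then Hahn–Banach) splits the multipliers of
an optimal `T u` between these two polyhedra, and the part belonging to `D` is a functional
`c ⬝ T` solving `(D)` with the same value. Conversely, for a solution of `(D)` the two polyhedra
cannot be disjoint, since a strictly separating functional would improve it, and weak duality
bounds `h` below on their intersection, where it therefore attains its minimum.
-/

/-- A generalized polyhedral convex set: the intersection of a closed affine subspace
with finitely many closed half-spaces. -/
def IsGPCS {X : Type*} [AddCommGroup X] [Module ℝ X] [TopologicalSpace X] (S : Set X) : Prop :=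
  ∃ (p : ℕ) (xs : Fin p → X →L[ℝ] ℝ) (α : Fin p → ℝ) (L : AffineSubspace ℝ X),
    IsClosed (L : Set X) ∧ S = {x | x ∈ L ∧ ∀ i, xs i x ≤ α i}

/-- A polyhedral convex set: a finite intersection of closed half-spaces (possibly all of `X`). -/
def IsPCS {X : Type*} [AddCommGroup X] [Module ℝ X] [TopologicalSpace X] (S : Set X) : Prop :=
  ∃ (p : ℕ) (xs : Fin p → X →L[ℝ] ℝ) (α : Fin p → ℝ),
    S = {x | ∀ i, xs i x ≤ α i}

open Matrix Finset

section Cone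

variable {E κ : Type*} [AddCommGroup E] [Module ℝ E]

lemma exists_nonneg_sum_erase_eq_of_not_linearIndepOn [DecidableEq κ] {a : κ → E}
    {s : Finset κ} {l : κ → ℝ} (h : ¬LinearIndepOn ℝ a s) (hl : ∀ i ∈ s, 0 ≤ l i) :
    ∃ j ∈ s, ∃ l' : κ → ℝ, (∀ i ∈ s.erase j, 0 ≤ l' i) ∧
      ∑ i ∈ s.erase j, l' i • a i = ∑ i ∈ s, l i • a i := by
  obtain ⟨g, hg, hpos⟩ : ∃ g : κ → ℝ, ∑ i ∈ s, g i • a i = 0 ∧ ∃ i ∈ s, 0 < g i := by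
    obtain ⟨g, hg, i, hi, hgi⟩ := not_linearIndepOn_finset_iff.1 h
    rcases hgi.lt_or_gt with hneg | hpos
    · exact ⟨-g, by simp [hg], i, hi, neg_pos.2 hneg⟩
    · exact ⟨g, hg, i, hi, hpos⟩
  obtain ⟨j, hj, hjmin⟩ := (s.filter (0 < g ·)).exists_min_image (fun i => l i / g i)
    (let ⟨i, hi, hgi⟩ := hpos; ⟨i, mem_filter.2 ⟨hi, hgi⟩⟩)
  obtain ⟨hjs, hgj⟩ := mem_filter.1 hj
  -- move along the relation `g` until the first coefficient, the one at `j`, vanishes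
  refine ⟨j, hjs, fun i => l i - l j / g j * g i, fun i hi => ?_, ?_⟩
  · have his := mem_of_mem_erase hi
    dsimp only
    rcases le_or_gt (g i) 0 with hgi | hgi
    · nlinarith [hl i his, div_nonneg (hl j hjs) hgj.le]
    · have := hjmin i (mem_filter.2 ⟨his, hgi⟩)
      rw [le_div_iff₀ hgi] at this
      linarith
  · rw [sum_erase _ (by simp only [div_mul_cancel₀ _ hgj.ne', sub_self, zero_smul])]
    simp [sub_smul, sum_sub_distrib, mul_smul, ← smul_sum, hg]

theorem exists_linearIndepOn_nonneg_sum_eq (a : κ → E) (s : Finset κ) (l : κ → ℝ)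
    (hl : ∀ i ∈ s, 0 ≤ l i) :
    ∃ t ⊆ s, LinearIndepOn ℝ a t ∧
      ∃ c : κ → ℝ, (∀ i ∈ t, 0 ≤ c i) ∧ ∑ i ∈ t, c i • a i = ∑ i ∈ s, l i • a i := by
  classical
  induction s using Finset.strongInduction generalizing l with
  | H s ih =>
    by_cases h : LinearIndepOn ℝ a s
    · exact ⟨s, subset_rfl, h, l, hl, rfl⟩
    obtain ⟨j, hj, l', hl', hsum⟩ := exists_nonneg_sum_erase_eq_of_not_linearIndepOn h hl
    obtain ⟨t, hts, ht, c, hc, hc'⟩ := ih _ (erase_ssubset hj) l' hl'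
    exact ⟨t, hts.trans (erase_subset _ _), ht, c, hc, hc'.trans hsum⟩

theorem isClosed_fintypeLinearCombination_image_nonneg [Fintype κ] [TopologicalSpace E]
    [IsTopologicalAddGroup E] [ContinuousSMul ℝ E] [T2Space E] (a : κ → E) :
    IsClosed (Fintype.linearCombination ℝ a '' {l | 0 ≤ l}) := by
  classical
  have hunion : Fintype.linearCombination ℝ a '' {l | 0 ≤ l} =
      ⋃ t ∈ {t : Finset κ | LinearIndepOn ℝ a t},
        Fintype.linearCombination ℝ (fun i : t => a i) '' {c | 0 ≤ c} := by
    ext x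
    simp only [Set.mem_image, Set.mem_iUnion, Set.mem_ofPred_eq, Fintype.linearCombination_apply]
    constructor
    · rintro ⟨l, hl, rfl⟩
      obtain ⟨t, -, ht, c, hc, hsum⟩ :=
        exists_linearIndepOn_nonneg_sum_eq a univ l fun i _ => hl i
      exact ⟨t, ht, fun i => c i, fun i => hc i i.2,
        by rw [← hsum, sum_coe_sort t fun i => c i • a i]⟩
    · rintro ⟨t, -, c, hc, rfl⟩
      refine ⟨fun i => if h : i ∈ t then c ⟨i, h⟩ else 0, fun i => ?_, ?_⟩
      · by_cases h : i ∈ t <;> simp [h]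
        exact hc _
      · rw [← sum_subset (subset_univ t) fun i _ hi => by simp [hi], ← sum_coe_sort t]
        simp
  rw [hunion]
  refine (Set.toFinite _).isClosed_biUnion fun t ht => ?_
  exact (LinearMap.isClosedEmbedding_of_injective (LinearMap.ker_eq_bot.2
    (linearIndependent_iff_injective_fintypeLinearCombination.1 ht))).isClosedMap _ isClosed_Ici

end Cone

section Farkas

variable {ι κ : Type*} [Fintype ι]

lemma dotProductEquiv_symm_dotProduct [DecidableEq ι] (g : Module.Dual ℝ (ι → ℝ)) (z : ι → ℝ) :
    (dotProductEquiv ℝ ι).symm g ⬝ᵥ z = g z :=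
  congrArg (fun g : Module.Dual ℝ (ι → ℝ) => g z) ((dotProductEquiv ℝ ι).apply_symm_apply g)

theorem exists_nonneg_sum_smul_eq_of_forall_dotProduct_nonpos [Fintype κ] (a : κ → ι → ℝ)
    (c : ι → ℝ) (h : ∀ x, (∀ i, a i ⬝ᵥ x ≤ 0) → c ⬝ᵥ x ≤ 0) :
    ∃ l : κ → ℝ, 0 ≤ l ∧ ∑ i, l i • a i = c := by
  classical
  let C : ProperCone ℝ (ι → ℝ) :=
    ⟨(PointedCone.positive ℝ (κ → ℝ)).map (Fintype.linearCombination ℝ a),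
      isClosed_fintypeLinearCombination_image_nonneg a⟩
  have hC : ∀ x, x ∈ C ↔ ∃ l : κ → ℝ, 0 ≤ l ∧ ∑ i, l i • a i = x := fun x => by
    change x ∈ PointedCone.map _ _ ↔ _
    simp [Fintype.linearCombination_apply]
  by_contra hc
  obtain ⟨f, hfC, hfc⟩ := C.hyperplane_separation_point (x₀ := c) ((hC c).not.2 hc)
  have hy := dotProductEquiv_symm_dotProduct f.toLinearMap
  simp only [ContinuousLinearMap.coe_coe] at hy
  set y := (dotProductEquiv ℝ ι).symm f.toLinearMap
  have := h (-y) fun i => by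
    rw [dotProduct_neg, dotProduct_comm, hy, neg_nonpos]
    exact hfC _ ((hC _).2 ⟨Pi.single i 1, by simp [Pi.single_nonneg], by simp [Pi.single_apply]⟩)
  rw [dotProduct_neg, dotProduct_comm, hy] at this
  linarith

end Farkas

section Polyhedron

variable {ι κ : Type*} [Fintype ι]

def polyhedron (A : κ → ι → ℝ) (b : κ → ℝ) : Set (ι → ℝ) := {t | ∀ i, A i ⬝ᵥ t ≤ b i}

lemma polyhedron_sumElim {κ' : Type*} (A : κ → ι → ℝ) (b : κ → ℝ) (A' : κ' → ι → ℝ)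
    (b' : κ' → ℝ) :
    polyhedron (Sum.elim A A') (Sum.elim b b') = polyhedron A b ∩ polyhedron A' b' := by
  ext t
  simp [polyhedron]

lemma sum_smul_dotProduct_le [Fintype κ] {A : κ → ι → ℝ} {b : κ → ℝ} {t : ι → ℝ}
    (ht : t ∈ polyhedron A b) {l : κ → ℝ} (hl : 0 ≤ l) :
    (∑ i, l i • A i) ⬝ᵥ t ≤ ∑ i, l i * b i := by
  rw [sum_dotProduct]
  exact sum_le_sum fun i _ => by
    rw [smul_dotProduct, smul_eq_mul]
    exact mul_le_mul_of_nonneg_left (ht i) (hl i)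

lemma inv_smul_mem_polyhedron {A : κ → ι → ℝ} {b : κ → ℝ} {x : ι → ℝ} {ξ : ℝ} (hξ : 0 < ξ)
    (hx : ∀ i, A i ⬝ᵥ x ≤ ξ * b i) : ξ⁻¹ • x ∈ polyhedron A b := fun i => by
  rw [dotProduct_smul, smul_eq_mul, inv_mul_le_iff₀ hξ]
  exact hx i

end Polyhedron

section Augment

variable {ι κ : Type*}

def augment (u : ι → ℝ) (α : ℝ) : Option ι → ℝ := fun o => o.elim α u

@[simp]
lemma augment_comp_some (u : ι → ℝ) (α : ℝ) : augment u α ∘ some = u := rfl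

@[simp]
lemma augment_none (u : ι → ℝ) (α : ℝ) : augment u α none = α := rfl

lemma augment_inj {u v : ι → ℝ} {α β : ℝ} : augment u α = augment v β ↔ u = v ∧ α = β := by
  refine ⟨fun h => ⟨funext fun i => congrFun h (some i), congrFun h none⟩, ?_⟩
  rintro ⟨rfl, rfl⟩
  rfl

lemma augment_dotProduct [Fintype ι] (u : ι → ℝ) (α : ℝ) (z : Option ι → ℝ) :
    augment u α ⬝ᵥ z = u ⬝ᵥ (z ∘ some) + α * z none := by
  simp [dotProduct, augment, Fintype.sum_option, add_comm]

lemma sum_smul_augment [Fintype κ] (l : κ → ℝ) (a : κ → ι → ℝ) (b : κ → ℝ) :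
    ∑ i, l i • augment (a i) (b i) = augment (∑ i, l i • a i) (∑ i, l i * b i) := by
  ext (_ | j) <;> simp [augment, Finset.sum_apply]

variable [Fintype ι] [Fintype κ]

theorem exists_nonneg_of_forall_homogenized (A : κ → ι → ℝ) (b : κ → ℝ) (c : ι → ℝ) (d : ℝ)
    (h : ∀ x ξ, 0 ≤ ξ → (∀ i, A i ⬝ᵥ x ≤ ξ * b i) → c ⬝ᵥ x ≤ ξ * d) :
    ∃ l : κ → ℝ, 0 ≤ l ∧ ∑ i, l i • A i = c ∧ ∑ i, l i * b i ≤ d := by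
  -- the cone spanned by the `(A i, -b i)` and by `(0, -1)`, which accounts for `0 ≤ ξ`
  obtain ⟨l, hl, hlc⟩ := exists_nonneg_sum_smul_eq_of_forall_dotProduct_nonpos
    (fun o : Option κ => augment (o.elim 0 A) (o.elim (-1) fun i => -b i)) (augment c (-d))
    fun z hz => by
      have hξ := hz none
      simp only [Option.elim, augment_dotProduct, zero_dotProduct] at hz hξ ⊢
      have := h (z ∘ some) (z none) (by linarith) fun i => by linarith [hz (some i)]
      linarith
  rw [sum_smul_augment, augment_inj, Fintype.sum_option, Fintype.sum_option] at hlc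
  simp only [Option.elim, smul_zero, zero_add, mul_neg, mul_one, sum_neg_distrib] at hlc
  exact ⟨fun i => l (some i), fun i => hl _, hlc.1,
    by linarith [hlc.2, show 0 ≤ l none from hl none]⟩

theorem exists_nonneg_of_polyhedron_eq_empty {A : κ → ι → ℝ} {b : κ → ℝ}
    (h : polyhedron A b = ∅) :
    ∃ l : κ → ℝ, 0 ≤ l ∧ ∑ i, l i • A i = 0 ∧ ∑ i, l i * b i < 0 := by
  obtain ⟨l, hl, hlA, hlb⟩ := exists_nonneg_of_forall_homogenized A b 0 (-1) fun x ξ hξ hx => by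
    rcases hξ.eq_or_lt with rfl | hξ
    · simp
    · exact absurd (inv_smul_mem_polyhedron hξ hx) (h ▸ Set.notMem_empty _)
  exact ⟨l, hl, hlA, by linarith⟩

theorem exists_nonneg_of_forall_mem_polyhedron {A : κ → ι → ℝ} {b : κ → ℝ} {c : ι → ℝ} {d : ℝ}
    (hne : (polyhedron A b).Nonempty) (h : ∀ t ∈ polyhedron A b, c ⬝ᵥ t ≤ d) :
    ∃ l : κ → ℝ, 0 ≤ l ∧ ∑ i, l i • A i = c ∧ ∑ i, l i * b i ≤ d := by
  refine exists_nonneg_of_forall_homogenized A b c d fun x ξ hξ hx => ?_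
  rcases hξ.eq_or_lt with rfl | hξ
  · -- `x` is a recession direction of the polyhedron, along which `c` stays bounded
    obtain ⟨t, ht⟩ := hne
    have hray : ∀ s : ℝ, 0 ≤ s → t + s • x ∈ polyhedron A b := fun s hs i => by
      rw [dotProduct_add, dotProduct_smul, smul_eq_mul]
      nlinarith [ht i, hx i]
    by_contra! hcx
    rw [zero_mul] at hcx
    have hd := h t ht
    have := h _ (hray ((d - c ⬝ᵥ t + 1) / c ⬝ᵥ x) (by positivity))
    rw [dotProduct_add, dotProduct_smul, smul_eq_mul, div_mul_cancel₀ _ hcx.ne'] at this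
    linarith
  · have := h _ (inv_smul_mem_polyhedron hξ hx)
    rwa [dotProduct_smul, smul_eq_mul, inv_mul_le_iff₀ hξ] at this

end Augment

section MaxAffine

variable {ι κ K : Type*} [Fintype ι] [Fintype κ] [Fintype K] [Nonempty K]

def maxAffine (w : K → ι → ℝ) (β : K → ℝ) (t : ι → ℝ) : ℝ :=
  univ.sup' univ_nonempty fun k => w k ⬝ᵥ t + β k

variable {w : K → ι → ℝ} {β : K → ℝ}

lemma le_maxAffine (t : ι → ℝ) (k : K) : w k ⬝ᵥ t + β k ≤ maxAffine w β t :=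
  le_sup' (fun k => w k ⬝ᵥ t + β k) (mem_univ k)

lemma maxAffine_le_iff {t : ι → ℝ} {σ : ℝ} :
    maxAffine w β t ≤ σ ↔ ∀ k, w k ⬝ᵥ t + β k ≤ σ := by
  simp [maxAffine]

lemma mem_polyhedron_maxAffine (t : ι → ℝ) :
    t ∈ polyhedron w fun k => maxAffine w β t - β k := fun k => by
  linarith [le_maxAffine (w := w) (β := β) t k]

theorem exists_multipliers_of_isMinOn {A : κ → ι → ℝ} {b : κ → ℝ} {t₀ : ι → ℝ}
    (ht₀ : t₀ ∈ polyhedron A b) (hmin : IsMinOn (maxAffine w β) (polyhedron A b) t₀) :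
    ∃ (l : κ → ℝ) (μ : K → ℝ), 0 ≤ l ∧ 0 ≤ μ ∧ ∑ k, μ k = 1 ∧
      ∑ i, l i • A i + ∑ k, μ k • w k = 0 ∧
      ∑ i, l i * b i - ∑ k, μ k * β k ≤ -maxAffine w β t₀ := by
  -- Farkas for the objective `-σ` on the epigraph `{(t, σ) | A t ≤ b, w k ⬝ t + β k ≤ σ}`
  let G : κ ⊕ K → Option ι → ℝ := fun o =>
    augment (Sum.elim A w o) (Sum.elim (fun _ => 0) (fun _ => -1) o)
  obtain ⟨l, hl, hlG, hlb⟩ := exists_nonneg_of_forall_mem_polyhedron (A := G)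
    (b := Sum.elim b fun k => -β k) (c := augment 0 (-1)) (d := -maxAffine w β t₀)
    ⟨augment t₀ (maxAffine w β t₀), by
      rintro (i | k) <;> simp only [G, Sum.elim_inl, Sum.elim_inr, augment_dotProduct]
      · simpa using ht₀ i
      · simp only [augment_comp_some, augment_none]
        linarith [le_maxAffine (w := w) (β := β) t₀ k]⟩
    fun z hz => by
      have hA : z ∘ some ∈ polyhedron A b := fun i => by
        simpa [G, augment_dotProduct] using hz (Sum.inl i)
      have hσ : maxAffine w β (z ∘ some) ≤ z none := maxAffine_le_iff.2 fun k => by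
        have := hz (Sum.inr k)
        simp only [G, Sum.elim_inr, augment_dotProduct] at this
        linarith
      rw [augment_dotProduct, zero_dotProduct]
      linarith [isMinOn_iff.1 hmin _ hA]
  rw [sum_smul_augment, augment_inj] at hlG
  simp only [Fintype.sum_sum_type, Sum.elim_inl, Sum.elim_inr, mul_zero, sum_const_zero,
    zero_add, mul_neg, mul_one, sum_neg_distrib, neg_inj] at hlG hlb
  exact ⟨fun i => l (.inl i), fun k => l (.inr k), fun i => hl _, fun k => hl _, hlG.2, hlG.1,
    by linarith⟩

lemma exists_gt_forall_le_maxAffine {A : κ → ι → ℝ} {b : κ → ℝ}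
    (hne : (polyhedron A b).Nonempty) {γ : ℝ} (hγ : ∀ t ∈ polyhedron A b, γ < maxAffine w β t) :
    ∃ γ' > γ, ∀ t ∈ polyhedron A b, γ' ≤ maxAffine w β t := by
  -- a Farkas certificate for `polyhedron A b ∩ {maxAffine w β ≤ γ} = ∅`
  obtain ⟨l, hl, hlA, hlb⟩ := exists_nonneg_of_polyhedron_eq_empty
    (A := Sum.elim A w) (b := Sum.elim b fun k => γ - β k) <| by
      rw [polyhedron_sumElim, Set.eq_empty_iff_forall_notMem]
      rintro t ⟨ht, htγ⟩
      exact (hγ t ht).not_ge (maxAffine_le_iff.2 fun k => by linarith [htγ k])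
  simp only [Fintype.sum_sum_type, Sum.elim_inl, Sum.elim_inr] at hlA hlb
  set s := ∑ k, l (.inr k)
  set δ := -(∑ i, l (.inl i) * b i + ∑ k, l (.inr k) * (γ - β k))
  have hkey : ∀ t ∈ polyhedron A b, δ ≤ s * (maxAffine w β t - γ) := fun t ht => by
    have h₁ := sum_smul_dotProduct_le ht fun i => hl (.inl i)
    have h₂ := sum_smul_dotProduct_le (mem_polyhedron_maxAffine (w := w) (β := β) t)
      fun k => hl (.inr k)
    have h₀ := congrArg (· ⬝ᵥ t) hlA
    simp only [add_dotProduct, zero_dotProduct] at h₀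
    have : ∑ k, l (.inr k) * (maxAffine w β t - β k) =
        ∑ k, l (.inr k) * (γ - β k) + s * (maxAffine w β t - γ) := by
      rw [sum_mul, ← sum_add_distrib]
      exact sum_congr rfl fun k _ => by ring
    linarith
  obtain ⟨t₁, ht₁⟩ := hne
  have hs : 0 < s := by
    by_contra! hs
    nlinarith [hkey t₁ ht₁, hγ t₁ ht₁, sum_nonneg fun k (_ : k ∈ univ) => hl (.inr k)]
  refine ⟨γ + δ / s, by linarith [div_pos (by linarith : 0 < δ) hs], fun t ht => ?_⟩
  linarith [(div_le_iff₀ hs).2 (by linarith [hkey t ht] : δ ≤ (maxAffine w β t - γ) * s)]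

end MaxAffine

section IsPolyhedron

variable {ι : Type*} [Fintype ι]

def IsPolyhedron (P : Set (ι → ℝ)) : Prop :=
  ∃ (κ : Type) (_ : Fintype κ) (A : κ → ι → ℝ) (b : κ → ℝ), P = polyhedron A b

lemma IsPolyhedron.inter {P Q : Set (ι → ℝ)} (hP : IsPolyhedron P) (hQ : IsPolyhedron Q) :
    IsPolyhedron (P ∩ Q) := by
  obtain ⟨κ, _, A, b, rfl⟩ := hP
  obtain ⟨κ', _, A', b', rfl⟩ := hQ
  exact ⟨κ ⊕ κ', inferInstance, _, _, (polyhedron_sumElim A b A' b').symm⟩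

lemma isPolyhedron_setOf_dotProduct_eq {κ : Type} [Fintype κ] (e : κ → ι → ℝ) (d : κ → ℝ) :
    IsPolyhedron {t | ∀ j, e j ⬝ᵥ t = d j} := by
  refine ⟨κ ⊕ κ, inferInstance, Sum.elim e (-e), Sum.elim d (-d), ?_⟩
  ext t
  simp only [Set.mem_ofPred_eq, polyhedron, Sum.forall, Sum.elim_inl, Sum.elim_inr, Pi.neg_apply,
    neg_dotProduct, neg_le_neg_iff, ← forall_and, le_antisymm_iff]

lemma isPolyhedron_setOf_apply_le {κ : Type} [Fintype κ] [DecidableEq ι] (e : κ → ι)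
    (α : κ → ℝ) : IsPolyhedron {t : ι → ℝ | ∀ i, t (e i) ≤ α i} :=
  ⟨κ, inferInstance, fun i => Pi.single (e i) 1, α, by ext t; simp [polyhedron]⟩

lemma Submodule.exists_mem_iff_forall_dotProduct_eq_zero (V : Submodule ℝ (ι → ℝ)) :
    ∃ (r : ℕ) (e : Fin r → ι → ℝ), ∀ z, z ∈ V ↔ ∀ j, e j ⬝ᵥ z = 0 := by
  classical
  let B := Module.finBasis ℝ ((ι → ℝ) ⧸ V)
  refine ⟨_, fun j => (dotProductEquiv ℝ ι).symm ((B.coord j).comp V.mkQ), fun z => ?_⟩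
  simp only [dotProductEquiv_symm_dotProduct, LinearMap.comp_apply, B.forall_coord_eq_zero_iff,
    Submodule.mkQ_apply, Submodule.Quotient.mk_eq_zero]

lemma AffineSubspace.isPolyhedron (M : AffineSubspace ℝ (ι → ℝ)) :
    IsPolyhedron (M : Set (ι → ℝ)) := by
  obtain rfl | ⟨t₀, ht₀⟩ := M.eq_bot_or_nonempty
  · simpa using isPolyhedron_setOf_dotProduct_eq (ι := ι) (fun _ : Unit => 0) fun _ => 1
  obtain ⟨r, e, he⟩ := M.direction.exists_mem_iff_forall_dotProduct_eq_zero
  convert isPolyhedron_setOf_dotProduct_eq e fun j => e j ⬝ᵥ t₀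
  ext t
  rw [SetLike.mem_coe, ← AffineSubspace.vsub_right_mem_direction_iff_mem ht₀, he]
  simp [dotProduct_sub, sub_eq_zero]

theorem IsPolyhedron.exists_separation_of_inter_eq_empty {P Q : Set (ι → ℝ)}
    (hP : IsPolyhedron P) (hQ : IsPolyhedron Q) (h : P ∩ Q = ∅) :
    ∃ (c : ι → ℝ) (a b : ℝ), (∀ t ∈ Q, -(c ⬝ᵥ t) ≤ a) ∧ (∀ t ∈ P, c ⬝ᵥ t ≤ b) ∧ a + b < 0 := by
  obtain ⟨κ, _, A, b, rfl⟩ := hP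
  obtain ⟨κ', _, A', b', rfl⟩ := hQ
  rw [← polyhedron_sumElim] at h
  obtain ⟨l, hl, hlA, hlb⟩ := exists_nonneg_of_polyhedron_eq_empty h
  simp only [Fintype.sum_sum_type, Sum.elim_inl, Sum.elim_inr] at hlA hlb
  refine ⟨∑ i, l (.inl i) • A i, ∑ j, l (.inr j) * b' j, ∑ i, l (.inl i) * b i,
    fun t ht => ?_, fun t ht => sum_smul_dotProduct_le ht fun i => hl _, by linarith⟩
  rw [eq_neg_of_add_eq_zero_left hlA, neg_dotProduct, neg_neg]
  exact sum_smul_dotProduct_le ht fun j => hl _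

variable {K : Type*} [Fintype K] [Nonempty K] {w : K → ι → ℝ} {β : K → ℝ}

theorem IsPolyhedron.exists_dual_bounds_of_isMinOn {P Q : Set (ι → ℝ)} (hP : IsPolyhedron P)
    (hQ : IsPolyhedron Q) {t₀ : ι → ℝ} (ht₀ : t₀ ∈ P ∩ Q)
    (hmin : IsMinOn (maxAffine w β) (P ∩ Q) t₀) :
    ∃ (c : ι → ℝ) (a b : ℝ), (∀ t ∈ Q, -(c ⬝ᵥ t) - maxAffine w β t ≤ a) ∧
      (∀ t ∈ P, c ⬝ᵥ t ≤ b) ∧ maxAffine w β t₀ ≤ -a - b := by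
  obtain ⟨κ, _, A, b, rfl⟩ := hP
  obtain ⟨κ', _, A', b', rfl⟩ := hQ
  rw [← polyhedron_sumElim] at ht₀ hmin
  obtain ⟨l, μ, hl, hμ, hμ1, hlA, hlb⟩ := exists_multipliers_of_isMinOn ht₀ hmin
  simp only [Fintype.sum_sum_type, Sum.elim_inl, Sum.elim_inr] at hlA hlb
  refine ⟨∑ i, l (.inl i) • A i, ∑ j, l (.inr j) * b' j - ∑ k, μ k * β k,
    ∑ i, l (.inl i) * b i, fun t ht => ?_, fun t ht => sum_smul_dotProduct_le ht fun i => hl _,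
    by linarith⟩
  have h₁ := sum_smul_dotProduct_le ht fun j => hl (.inr j)
  have h₂ := sum_smul_dotProduct_le (mem_polyhedron_maxAffine (w := w) (β := β) t) hμ
  simp only [mul_sub, sum_sub_distrib, ← sum_mul, hμ1, one_mul] at h₂
  rw [add_assoc] at hlA
  rw [eq_neg_of_add_eq_zero_left hlA, neg_dotProduct, neg_neg, add_dotProduct]
  linarith

theorem IsPolyhedron.exists_isMinOn_maxAffine {P : Set (ι → ℝ)} (hP : IsPolyhedron P)
    (hne : P.Nonempty) (hbdd : BddBelow (maxAffine w β '' P)) :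
    ∃ t₀ ∈ P, IsMinOn (maxAffine w β) P t₀ := by
  obtain ⟨κ, _, A, b, rfl⟩ := hP
  set γ := sInf (maxAffine w β '' polyhedron A b)
  have hγ : ∀ t ∈ polyhedron A b, γ ≤ maxAffine w β t := fun t ht => csInf_le hbdd ⟨t, ht, rfl⟩
  by_contra! hno
  obtain ⟨γ', hγγ', hγ'⟩ := exists_gt_forall_le_maxAffine hne fun t ht =>
    (hγ t ht).lt_of_ne fun h => hno t ht (isMinOn_iff.2 fun t' ht' => h ▸ hγ t' ht')
  obtain ⟨t₁, ht₁⟩ := hne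
  exact hγγ'.not_ge (le_csInf ⟨_, t₁, ht₁, rfl⟩ <| by rintro _ ⟨t, ht, rfl⟩; exact hγ' t ht)

end IsPolyhedron

section Duality

variable {X : Type*} [AddCommGroup X] [Module ℝ X] [TopologicalSpace X]

noncomputable def dualObjective (f : X → EReal) (D : Set X) (φ : X →L[ℝ] ℝ) : EReal :=
  -(⨆ x : X, ((((-φ) x : ℝ) : EReal) - f x)) - ⨆ x ∈ D, ((φ x : ℝ) : EReal)

lemma EReal.neg_coe_sub_sub_coe (r : ℝ) (y : EReal) : -(((-r : ℝ) : EReal) - y) - r = y := by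
  induction y using EReal.rec
  · simp
  · norm_cast
    ring
  · simp

lemma EReal.exists_coe_of_neg_sub {a b : EReal} (h₁ : -a - b ≠ ⊤) (h₂ : -a - b ≠ ⊥) :
    ∃ r s : ℝ, a = r ∧ b = s := by
  induction a using EReal.rec <;> induction b using EReal.rec <;> simp_all

lemma exists_clm_apply_eq_dotProduct {ι : Type*} [Fintype ι] (T : X →L[ℝ] (ι → ℝ))
    (c : ι → ℝ) : ∃ φ : X →L[ℝ] ℝ, ∀ x, φ x = c ⬝ᵥ T x :=
  ⟨(LinearMap.toContinuousLinearMap (dotProductBilin ℝ ℝ c)).comp T, fun x => by simp⟩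

variable {f : X → EReal} {D E : Set X} {φ : X →L[ℝ] ℝ}

lemma dualObjective_le {x : X} (hx : x ∈ D) : dualObjective f D φ ≤ f x := by
  calc dualObjective f D φ ≤ -((((-φ) x : ℝ) : EReal) - f x) - φ x :=
        EReal.sub_le_sub
          (EReal.neg_le_neg_iff.2 (le_iSup (fun y => (((-φ) y : ℝ) : EReal) - f y) x))
          (le_iSup₂ (f := fun y (_ : y ∈ D) => ((φ y : ℝ) : EReal)) x hx)
    _ = f x := EReal.neg_coe_sub_sub_coe _ _

lemma coe_le_dualObjective {F : X → ℝ} (hf : ∀ x ∈ E, f x = F x) (hf' : ∀ x ∉ E, f x = ⊤)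
    {a b : ℝ} (ha : ∀ x ∈ E, -φ x - F x ≤ a) (hb : ∀ x ∈ D, φ x ≤ b) :
    ((-a - b : ℝ) : EReal) ≤ dualObjective f D φ := by
  have hconj : ⨆ x : X, ((((-φ) x : ℝ) : EReal) - f x) ≤ a := iSup_le fun x => by
    by_cases hx : x ∈ E
    · rw [hf x hx, ← EReal.coe_sub]
      exact EReal.coe_le_coe_iff.2 (ha x hx)
    · simp [hf' x hx]
  rw [EReal.coe_sub, EReal.coe_neg]
  exact EReal.sub_le_sub (EReal.neg_le_neg_iff.2 hconj)
    (iSup₂_le fun x hx => EReal.coe_le_coe_iff.2 (hb x hx))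

lemma exists_eq_coe_of_dualObjective {F : X → ℝ} (hf : ∀ x ∈ E, f x = F x)
    (h₁ : dualObjective f D φ ≠ ⊤) (h₂ : dualObjective f D φ ≠ ⊥) :
    ∃ a b : ℝ, dualObjective f D φ = ((-a - b : ℝ) : EReal) ∧
      (∀ x ∈ E, -φ x - F x ≤ a) ∧ ∀ x ∈ D, φ x ≤ b := by
  obtain ⟨a, b, ha, hb⟩ := EReal.exists_coe_of_neg_sub h₁ h₂
  refine ⟨a, b, by rw [dualObjective, ha, hb, EReal.coe_sub, EReal.coe_neg], fun x hx => ?_,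
    fun x hx => EReal.coe_le_coe_iff.1
      (hb ▸ le_iSup₂ (f := fun y (_ : y ∈ D) => ((φ y : ℝ) : EReal)) x hx)⟩
  have := ha ▸ le_iSup (fun y => (((-φ) y : ℝ) : EReal) - f y) x
  rw [hf x hx, ← EReal.coe_sub] at this
  exact EReal.coe_le_coe_iff.1 this

lemma strong_duality_of_dualObjective_eq {u : X} (huD : u ∈ D) (hu : f u ≠ ⊤) (hu' : f u ≠ ⊥)
    (humin : ∀ x ∈ D, f u ≤ f x) (hφ : dualObjective f D φ = f u) :
    (∃ u, u ∈ D ∧ f u ≠ ⊤ ∧ f u ≠ ⊥ ∧ ∀ x ∈ D, f u ≤ f x) ∧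
      (∃ φ : X →L[ℝ] ℝ, dualObjective f D φ ≠ ⊤ ∧ dualObjective f D φ ≠ ⊥ ∧
        ∀ ψ : X →L[ℝ] ℝ, dualObjective f D ψ ≤ dualObjective f D φ) ∧
      (⨅ x ∈ D, f x) = ⨆ ψ : X →L[ℝ] ℝ, dualObjective f D ψ := by
  refine ⟨⟨u, huD, hu, hu', humin⟩, ⟨φ, by rwa [hφ], by rwa [hφ], fun ψ => ?_⟩, ?_⟩
  · rw [hφ]
    exact dualObjective_le huD
  · have hinf : (⨅ x ∈ D, f x) = f u := le_antisymm (iInf₂_le u huD) (le_iInf₂ humin)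
    have hsup : (⨆ ψ : X →L[ℝ] ℝ, dualObjective f D ψ) = f u :=
      le_antisymm (iSup_le fun ψ => dualObjective_le huD) (hφ ▸ le_iSup _ φ)
    rw [hinf, hsup]

end Duality

structure PolyhedralModel {X ι : Type*} [AddCommGroup X] [Module ℝ X] [TopologicalSpace X]
    [Fintype ι] (T : X →L[ℝ] (ι → ℝ)) (D E : Set X) where
  PD : Set (ι → ℝ)
  PE : Set (ι → ℝ)
  isPolyhedron_PD : IsPolyhedron PD
  isPolyhedron_PE : IsPolyhedron PE
  mapsTo_D : Set.MapsTo T D PD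
  mapsTo_E : Set.MapsTo T E PE
  inter_subset : PD ∩ PE ⊆ T '' (D ∩ E)

namespace PolyhedralModel

variable {X ι K : Type*} [AddCommGroup X] [Module ℝ X] [TopologicalSpace X] [Fintype ι]
  {T : X →L[ℝ] (ι → ℝ)} {D E : Set X} {f : X → EReal}

def symm (M : PolyhedralModel T D E) : PolyhedralModel T E D where
  PD := M.PE
  PE := M.PD
  isPolyhedron_PD := M.isPolyhedron_PE
  isPolyhedron_PE := M.isPolyhedron_PD
  mapsTo_D := M.mapsTo_E
  mapsTo_E := M.mapsTo_D
  inter_subset := by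
    rw [Set.inter_comm, Set.inter_comm E]
    exact M.inter_subset

lemma forall_coe_le_iff (M : PolyhedralModel T D E) {h : (ι → ℝ) → ℝ}
    (hf : ∀ x ∈ E, f x = h (T x)) (hf' : ∀ x ∉ E, f x = ⊤) (γ : ℝ) :
    (∀ x ∈ D, (γ : EReal) ≤ f x) ↔ ∀ t ∈ M.PD ∩ M.PE, γ ≤ h t := by
  constructor
  · intro hγ t ht
    obtain ⟨x, ⟨hxD, hxE⟩, rfl⟩ := M.inter_subset ht
    exact EReal.coe_le_coe_iff.1 (hf x hxE ▸ hγ x hxD)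
  · intro hγ x hxD
    by_cases hxE : x ∈ E
    · exact hf x hxE ▸ EReal.coe_le_coe_iff.2 (hγ _ ⟨M.mapsTo_D hxD, M.mapsTo_E hxE⟩)
    · simp [hf' x hxE]

variable [Fintype K] [Nonempty K] {w : K → ι → ℝ} {β : K → ℝ}

lemma exists_dualObjective_eq (M : PolyhedralModel T D E)
    (hf : ∀ x ∈ E, f x = maxAffine w β (T x)) (hf' : ∀ x ∉ E, f x = ⊤) {u : X} (huD : u ∈ D)
    (huE : u ∈ E) (humin : ∀ x ∈ D, f u ≤ f x) : ∃ φ, dualObjective f D φ = f u := by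
  have hmin := (M.forall_coe_le_iff hf hf' _).1 (hf u huE ▸ humin)
  obtain ⟨c, a, b, ha, hb, hab⟩ := M.isPolyhedron_PD.exists_dual_bounds_of_isMinOn
    M.isPolyhedron_PE ⟨M.mapsTo_D huD, M.mapsTo_E huE⟩ (isMinOn_iff.2 hmin)
  obtain ⟨φ, hφ⟩ := exists_clm_apply_eq_dotProduct T c
  refine ⟨φ, le_antisymm (dualObjective_le huD) ?_⟩
  calc f u ≤ ((-a - b : ℝ) : EReal) := hf u huE ▸ EReal.coe_le_coe_iff.2 hab
    _ ≤ dualObjective f D φ := coe_le_dualObjective hf hf'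
        (fun x hx => hφ x ▸ ha _ (M.mapsTo_E hx)) fun x hx => hφ x ▸ hb _ (M.mapsTo_D hx)

lemma exists_isMinOn_of_dualObjective (M : PolyhedralModel T D E)
    (hf : ∀ x ∈ E, f x = maxAffine w β (T x)) (hf' : ∀ x ∉ E, f x = ⊤) {φ : X →L[ℝ] ℝ}
    (h₁ : dualObjective f D φ ≠ ⊤) (h₂ : dualObjective f D φ ≠ ⊥)
    (hmax : ∀ ψ, dualObjective f D ψ ≤ dualObjective f D φ) :
    ∃ u ∈ D, u ∈ E ∧ ∀ x ∈ D, f u ≤ f x := by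
  obtain ⟨a, b, hφ, ha, hb⟩ := exists_eq_coe_of_dualObjective hf h₁ h₂
  have hne : (M.PD ∩ M.PE).Nonempty := by
    -- otherwise adding a separating functional to `φ` increases the dual objective
    by_contra hempty
    obtain ⟨c, a', b', ha', hb', hab'⟩ := M.isPolyhedron_PD.exists_separation_of_inter_eq_empty
      M.isPolyhedron_PE (Set.not_nonempty_iff_eq_empty.1 hempty)
    obtain ⟨ψ, hψ⟩ := exists_clm_apply_eq_dotProduct T c
    have hψE : ∀ x ∈ E, -(φ + ψ) x - maxAffine w β (T x) ≤ a + a' := fun x hx => by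
      rw [_root_.add_apply, hψ]
      linarith [ha x hx, ha' _ (M.mapsTo_E hx)]
    have hψD : ∀ x ∈ D, (φ + ψ) x ≤ b + b' := fun x hx => by
      rw [_root_.add_apply, hψ]
      linarith [hb x hx, hb' _ (M.mapsTo_D hx)]
    have := (coe_le_dualObjective hf hf' hψE hψD).trans (hmax _)
    rw [hφ, EReal.coe_le_coe_iff] at this
    linarith
  have hbdd := (M.forall_coe_le_iff hf hf' (-a - b)).1 fun x hx => hφ ▸ dualObjective_le hx
  obtain ⟨t₀, ht₀, hmin⟩ := (M.isPolyhedron_PD.inter M.isPolyhedron_PE).exists_isMinOn_maxAffine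
    hne ⟨-a - b, by rintro _ ⟨t, ht, rfl⟩; exact hbdd t ht⟩
  obtain ⟨u, ⟨huD, huE⟩, rfl⟩ := M.inter_subset ht₀
  exact ⟨u, huD, huE, hf u huE ▸ (M.forall_coe_le_iff hf hf' _).2 (isMinOn_iff.1 hmin)⟩

end PolyhedralModel

lemma exists_polyhedralModel {X : Type*} {K : Type} [AddCommGroup X] [Module ℝ X]
    [TopologicalSpace X] [Fintype K] {D E : Set X} (hD : IsPCS D) (hE : IsGPCS E)
    (v : K → X →L[ℝ] ℝ) :
    ∃ (ι : Type) (_ : Fintype ι) (T : X →L[ℝ] (ι → ℝ)) (w : K → ι → ℝ),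
      Nonempty (PolyhedralModel T D E) ∧ ∀ k x, v k x = w k ⬝ᵥ T x := by
  classical
  obtain ⟨p, xs, α, rfl⟩ := hD
  obtain ⟨q, ys, γ, L, -, rfl⟩ := hE
  let T := ContinuousLinearMap.pi (Sum.elim (Sum.elim xs ys) v)
  refine ⟨(Fin p ⊕ Fin q) ⊕ K, inferInstance, T, fun k => Pi.single (.inr k) 1, ⟨?_⟩,
    fun k x => by simp [T]⟩
  -- only `E` involves an affine subspace, so that `T '' L` can be intersected with the rest
  exact {
    PD := {t | ∀ i, t (.inl (.inl i)) ≤ α i}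
    PE := T '' L ∩ {t | ∀ j, t (.inl (.inr j)) ≤ γ j}
    isPolyhedron_PD := isPolyhedron_setOf_apply_le _ α
    isPolyhedron_PE := (L.map T.toLinearMap.toAffineMap).isPolyhedron.inter
      (isPolyhedron_setOf_apply_le _ γ)
    mapsTo_D := fun x hx => hx
    mapsTo_E := fun x ⟨hxL, hx⟩ => ⟨⟨x, hxL, rfl⟩, hx⟩
    inter_subset := by
      rintro _ ⟨hD, ⟨x, hxL, rfl⟩, hE⟩
      exact ⟨x, ⟨hD, hxL, hE⟩, rfl⟩ }

theorem strong_duality_I_general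
    {X : Type*}
    [AddCommGroup X] [Module ℝ X] [TopologicalSpace X]
    (D : Set X) (hD : IsGPCS D)
    (domf : Set X) (hdomf : IsGPCS domf)
    (m : ℕ) (v : Fin (m + 1) → X →L[ℝ] ℝ) (β : Fin (m + 1) → ℝ)
    (f : X → EReal)
    (hf : ∀ x ∈ domf,
      f x = ((Finset.univ.sup' Finset.univ_nonempty fun k => v k x + β k : ℝ) : EReal))
    (hf' : ∀ x ∉ domf, f x = ⊤)
    (hpoly : IsPCS domf ∨ IsPCS D)
    (g : (X →L[ℝ] ℝ) → EReal)
    (hg : ∀ φ : X →L[ℝ] ℝ,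
      g φ = -(⨆ x : X, ((((-φ) x : ℝ) : EReal) - f x)) - ⨆ x ∈ D, ((φ x : ℝ) : EReal))
    (hsol : (∃ u, u ∈ D ∧ f u ≠ ⊤ ∧ f u ≠ ⊥ ∧ ∀ x ∈ D, f u ≤ f x) ∨
      (∃ φ : X →L[ℝ] ℝ, g φ ≠ ⊤ ∧ g φ ≠ ⊥ ∧ ∀ ψ : X →L[ℝ] ℝ, g ψ ≤ g φ)) :
    (∃ u, u ∈ D ∧ f u ≠ ⊤ ∧ f u ≠ ⊥ ∧ ∀ x ∈ D, f u ≤ f x) ∧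
      (∃ φ : X →L[ℝ] ℝ, g φ ≠ ⊤ ∧ g φ ≠ ⊥ ∧ ∀ ψ : X →L[ℝ] ℝ, g ψ ≤ g φ) ∧
      (⨅ x ∈ D, f x) = ⨆ ψ : X →L[ℝ] ℝ, g ψ := by
  obtain ⟨ι, _, T, w, ⟨M⟩, hv⟩ : ∃ (ι : Type) (_ : Fintype ι) (T : X →L[ℝ] (ι → ℝ))
      (w : Fin (m + 1) → ι → ℝ), Nonempty (PolyhedralModel T D domf) ∧
        ∀ k x, v k x = w k ⬝ᵥ T x := by
    rcases hpoly with hpoly | hpoly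
    · obtain ⟨ι, _, T, w, ⟨M⟩, hv⟩ := exists_polyhedralModel hpoly hD v
      exact ⟨ι, _, T, w, ⟨M.symm⟩, hv⟩
    · exact exists_polyhedralModel hpoly hdomf v
  have hfT : ∀ x ∈ domf, f x = maxAffine w β (T x) := fun x hx => by
    simp only [hf x hx, maxAffine, hv]
  obtain rfl : g = dualObjective f D := funext hg
  obtain ⟨u, huD, hudom, humin⟩ : ∃ u ∈ D, u ∈ domf ∧ ∀ x ∈ D, f u ≤ f x := by
    rcases hsol with ⟨u, huD, hu, -, humin⟩ | ⟨φ, hφ, hφ', hφmax⟩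
    · exact ⟨u, huD, not_not.1 (mt (hf' u) hu), humin⟩
    · exact M.exists_isMinOn_of_dualObjective hfT hf' hφ hφ' hφmax
  obtain ⟨φ, hφ⟩ := M.exists_dualObjective_eq hfT hf' huD hudom humin
  exact strong_duality_of_dualObjective_eq huD (by simp [hfT u hudom])
    (by simp [hfT u hudom]) humin hφ

/-- **Strong duality theorem I.**  `D` is a nonempty generalized polyhedral convex set and
`f` a proper generalized polyhedral convex function; assume moreover that either `f` is
polyhedral convex (equivalently: `dom f` is a polyhedral convex set) or `D` is polyhedral
convex.  If one of the problems `(P) : min {f x | x ∈ D}` and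
`(D) : max {g φ}` (with `g φ = −f*(−φ) − sup_{x ∈ D} ⟨φ, x⟩`) has a solution, then both
have solutions and their optimal values are equal. -/
theorem strong_duality_I
    {X : Type*}
    [AddCommGroup X] [Module ℝ X] [TopologicalSpace X] [IsTopologicalAddGroup X]
    [ContinuousSMul ℝ X] [LocallyConvexSpace ℝ X] [T2Space X]
    (D : Set X) (hD : IsGPCS D) (hDne : D.Nonempty)
    (domf : Set X) (hdomf : IsGPCS domf) (hdomne : domf.Nonempty)
    (m : ℕ) (v : Fin (m + 1) → X →L[ℝ] ℝ) (β : Fin (m + 1) → ℝ)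
    (f : X → EReal)
    (hf : ∀ x ∈ domf,
      f x = ((Finset.univ.sup' Finset.univ_nonempty fun k => v k x + β k : ℝ) : EReal))
    (hf' : ∀ x ∉ domf, f x = ⊤)
    (hpoly : IsPCS domf ∨ IsPCS D)
    (g : (X →L[ℝ] ℝ) → EReal)
    (hg : ∀ φ : X →L[ℝ] ℝ,
      g φ = -(⨆ x : X, ((((-φ) x : ℝ) : EReal) - f x)) - ⨆ x ∈ D, ((φ x : ℝ) : EReal))
    (hsol : (∃ u, u ∈ D ∧ f u ≠ ⊤ ∧ f u ≠ ⊥ ∧ ∀ x ∈ D, f u ≤ f x) ∨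
      (∃ φ : X →L[ℝ] ℝ, g φ ≠ ⊤ ∧ g φ ≠ ⊥ ∧ ∀ ψ : X →L[ℝ] ℝ, g ψ ≤ g φ)) :
    (∃ u, u ∈ D ∧ f u ≠ ⊤ ∧ f u ≠ ⊥ ∧ ∀ x ∈ D, f u ≤ f x) ∧
      (∃ φ : X →L[ℝ] ℝ, g φ ≠ ⊤ ∧ g φ ≠ ⊥ ∧ ∀ ψ : X →L[ℝ] ℝ, g ψ ≤ g φ) ∧
      (⨅ x ∈ D, f x) = ⨆ ψ : X →L[ℝ] ℝ, g ψ :=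
  strong_duality_I_general D hD domf hdomf m v β f hf hf' hpoly g hg hsol
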